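/- arXiv:0801.1357 — 2 statements merged into one kernel-verified Lean document; each statement's English description precedes it below -/
import Mathlib

section
/- Let r : ℕ → ℝ satisfy |r(k)| ≤ ∑_{j=0}^∞ θ_j θ_{k+j} where θ_j ≥ 0 are summable with tail sums Θ_k = ∑_{i≥k} θ_i. Then n^{−1} ∑_{k=1}^{n−1} k|r(k)| ≤ C n^{−1} ∑_{k=0}^{n} Θ_k for a constant C depending only on Θ_0 = ∑_j θ_j. -/
/-!
Write `Θ_k = ∑_{i ≥ k} θ_i`, so that `θ_k = Θ_k - Θ_{k+1}`. Abel summation gives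
`∑_{k<n} k θ_{k+j} ≤ ∑_{k<n} Θ_{k+j+1} ≤ ∑_{k≤n} Θ_k` for every shift `j`, since `Θ` is
nonnegative and antitone. Multiplying by `θ_j` and summing over `j` bounds
`∑_{k<n} k ∑_j θ_j θ_{k+j}` by `Θ_0 ∑_{k≤n} Θ_k`, so `C = Θ_0 + 1` works.
-/

open Finset

noncomputable def tailSum (θ : ℕ → ℝ) (k : ℕ) : ℝ := ∑' i, θ (k + i)

section TailSum

variable {θ : ℕ → ℝ}

lemma summable_tail (hsum : Summable θ) (k : ℕ) : Summable fun i => θ (k + i) := by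
  simpa only [add_comm k] using (summable_nat_add_iff k).2 hsum

lemma tailSum_nonneg (hθ : ∀ j, 0 ≤ θ j) (k : ℕ) : 0 ≤ tailSum θ k :=
  tsum_nonneg fun _ => hθ _

lemma tailSum_eq_add_tailSum_succ (hsum : Summable θ) (k : ℕ) :
    tailSum θ k = θ k + tailSum θ (k + 1) := by
  simp only [tailSum, (summable_tail hsum k).tsum_eq_zero_add, add_zero, add_assoc,
    add_comm 1]

lemma tailSum_antitone (hθ : ∀ j, 0 ≤ θ j) (hsum : Summable θ) : Antitone (tailSum θ) :=
  antitone_nat_of_succ_le fun k => by linarith [tailSum_eq_add_tailSum_succ hsum k, hθ k]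

lemma tailSum_comp_add_right (j k : ℕ) :
    tailSum (fun i => θ (i + j)) k = tailSum θ (k + j) := by
  simp only [tailSum, add_right_comm k]

lemma sum_range_mul_add_mul_tailSum (hsum : Summable θ) (n : ℕ) :
    ∑ k ∈ range n, (k : ℝ) * θ k + n * tailSum θ n = ∑ k ∈ range n, tailSum θ (k + 1) := by
  induction n with
  | zero => simp
  | succ n ih =>
    rw [sum_range_succ, sum_range_succ, ← ih, tailSum_eq_add_tailSum_succ hsum n]
    push_cast
    ring

lemma sum_range_mul_le_sum_tailSum (hθ : ∀ j, 0 ≤ θ j) (hsum : Summable θ) (n : ℕ) :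
    ∑ k ∈ range n, (k : ℝ) * θ k ≤ ∑ k ∈ range n, tailSum θ (k + 1) := by
  rw [← sum_range_mul_add_mul_tailSum hsum n]
  exact le_add_of_nonneg_right (mul_nonneg n.cast_nonneg (tailSum_nonneg hθ n))

lemma sum_range_mul_comp_add_le (hθ : ∀ j, 0 ≤ θ j) (hsum : Summable θ) (j n : ℕ) :
    ∑ k ∈ range n, (k : ℝ) * θ (k + j) ≤ ∑ k ∈ range (n + 1), tailSum θ k := calc
  ∑ k ∈ range n, (k : ℝ) * θ (k + j) ≤ ∑ k ∈ range n, tailSum θ (k + 1 + j) := by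
    simpa only [tailSum_comp_add_right] using
      sum_range_mul_le_sum_tailSum (fun i => hθ (i + j)) ((summable_nat_add_iff j).2 hsum) n
  _ ≤ ∑ k ∈ range n, tailSum θ (k + 1) :=
    sum_le_sum fun k _ => tailSum_antitone hθ hsum (Nat.le_add_right _ _)
  _ ≤ ∑ k ∈ range (n + 1), tailSum θ k := by
    rw [sum_range_succ']
    exact le_add_of_nonneg_right (tailSum_nonneg hθ 0)

lemma summable_mul_comp_add (hθ : ∀ j, 0 ≤ θ j) (hsum : Summable θ) (k : ℕ) :
    Summable fun j => θ j * θ (k + j) :=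
  (hsum.mul_right (∑' i, θ i)).of_nonneg_of_le (fun j => mul_nonneg (hθ j) (hθ _))
    fun j => mul_le_mul_of_nonneg_left (hsum.le_tsum _ fun i _ => hθ i) (hθ j)

lemma sum_range_mul_tsum_mul_le (hθ : ∀ j, 0 ≤ θ j) (hsum : Summable θ) (n : ℕ) :
    ∑ k ∈ range n, (k : ℝ) * ∑' j, θ j * θ (k + j) ≤
      (∑' j, θ j) * ∑ k ∈ range (n + 1), tailSum θ k := by
  set T := ∑ k ∈ range (n + 1), tailSum θ k
  have hterm : ∀ k ∈ range n, Summable fun j => (k : ℝ) * (θ j * θ (k + j)) :=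
    fun k _ => (summable_mul_comp_add hθ hsum k).mul_left _
  calc ∑ k ∈ range n, (k : ℝ) * ∑' j, θ j * θ (k + j)
      = ∑' j, ∑ k ∈ range n, (k : ℝ) * (θ j * θ (k + j)) := by
        simp only [← tsum_mul_left]
        exact (Summable.tsum_finsetSum hterm).symm
    _ ≤ ∑' j, θ j * T := by
        refine (summable_sum hterm).tsum_le_tsum (fun j => ?_) (hsum.mul_right T)
        calc ∑ k ∈ range n, (k : ℝ) * (θ j * θ (k + j))
            = θ j * ∑ k ∈ range n, (k : ℝ) * θ (k + j) := by
              rw [mul_sum]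
              exact sum_congr rfl fun k _ => by ring
          _ ≤ θ j * T := by
              simpa only [add_comm _ j] using
                mul_le_mul_of_nonneg_left (sum_range_mul_comp_add_le hθ hsum j n) (hθ j)
    _ = (∑' j, θ j) * T := tsum_mul_right

end TailSum

/-- Abel-summation bound: if `|r(k)| ≤ ∑_{j≥0} θ_j θ_{k+j}` with `θ ≥ 0` summable and tail sums
`Θ_k = ∑_{i≥k} θ_i`, then `n⁻¹ ∑_{k=1}^{n-1} k |r(k)| ≤ C n⁻¹ ∑_{k=0}^n Θ_k` for a constant `C`
depending only on `Θ_0`. -/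
theorem stmt_7 (θ : ℕ → ℝ) (hθ : ∀ j, 0 ≤ θ j) (hsum : Summable θ)
    (r : ℕ → ℝ) (hr : ∀ k, |r k| ≤ ∑' j, θ j * θ (k + j)) :
    ∃ C : ℝ, 0 < C ∧ ∀ n : ℕ, 1 ≤ n →
      (n : ℝ)⁻¹ * ∑ k ∈ Finset.Ico 1 n, (k : ℝ) * |r k| ≤
        C * (n : ℝ)⁻¹ * ∑ k ∈ Finset.range (n + 1), ∑' i, θ (k + i) := by
  have hΘ₀ : 0 ≤ ∑' j, θ j := tsum_nonneg hθ
  refine ⟨(∑' j, θ j) + 1, by linarith, fun n _ => ?_⟩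
  have hT : 0 ≤ ∑ k ∈ range (n + 1), tailSum θ k := sum_nonneg fun k _ => tailSum_nonneg hθ k
  have hweighted : ∑ k ∈ Ico 1 n, (k : ℝ) * |r k| ≤
      ((∑' j, θ j) + 1) * ∑ k ∈ range (n + 1), tailSum θ k :=
    calc ∑ k ∈ Ico 1 n, (k : ℝ) * |r k|
        ≤ ∑ k ∈ range n, (k : ℝ) * |r k| :=
          sum_le_sum_of_subset_of_nonneg (fun k hk => mem_range.2 (mem_Ico.1 hk).2)
            fun k _ _ => by positivity
      _ ≤ ∑ k ∈ range n, (k : ℝ) * ∑' j, θ j * θ (k + j) :=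
          sum_le_sum fun k _ => mul_le_mul_of_nonneg_left (hr k) k.cast_nonneg
      _ ≤ (∑' j, θ j) * ∑ k ∈ range (n + 1), tailSum θ k :=
          sum_range_mul_tsum_mul_le hθ hsum n
      _ ≤ ((∑' j, θ j) + 1) * ∑ k ∈ range (n + 1), tailSum θ k := by linarith
  exact (mul_le_mul_of_nonneg_left hweighted (inv_nonneg.2 n.cast_nonneg)).trans_eq (by
    simp only [tailSum]; ring)
end

section
/- Under the same assumptions, with S_{n,i,1} = ∑_{k=1}^n X_k cos(kω_i) and S_{n,j,2} = ∑_{k=1}^n X_k sin(kω_j), one has max_{1≤i,j≤q} |E S_{n,i,1} S_{n,j,2}| ≤ C ∑_{k=0}^n Θ_{k,2}. -/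
/-!
Expanding the product, `E S_{n,i,1} S_{n,j,2} = ∑_{k,l ≤ n} cos (k ω_i) sin (l ω_j) r |k - l|`.
Grouped by the lag `u = |k - l|`, the coefficient of `r u` is the circular sum
`∑_{l=1}^n (cos ((l+u) ω_i) sin (l ω_j) + cos (l ω_i) sin ((l+u) ω_j))` with its last `u` terms
removed. The circular sum vanishes: by the product-to-sum formulas it is made of sums of `sin` along
the Fourier frequencies `ω_i + ω_j` and `ω_i - ω_j`, which are not multiples of `2π` (for `i = j` the
two difference terms cancel instead). Hence the coefficient is at most `2u`, and
`∑_{u<n} u |r u| ≤ ∑_u (u+1) ∑_j θ_j θ_{u+j} ≤ (∑_j θ_j) ∑_{k<n} Θ_k`, because `θ_{u+j}` occurs in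
each tail `Θ_k` with `k ≤ u`.
-/

open MeasureTheory Real Finset

theorem sum_range_sin_mul_add_eq_zero {n : ℕ} {m : ℤ} (hm : ¬ (n : ℤ) ∣ m) (φ : ℝ) :
    ∑ l ∈ range n, sin (l * (2 * π * m / n) + φ) = 0 := by
  rcases eq_or_ne n 0 with rfl | hn
  · simp
  set ζ := Complex.exp (2 * π * Complex.I / n)
  have hζ : IsPrimitiveRoot ζ n := Complex.isPrimitiveRoot_exp n hn
  have hz : ζ ^ m ≠ 1 := (hζ.zpow_eq_one_iff_dvd m).not.2 hm
  have hzn : (ζ ^ m) ^ n = 1 := by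
    rw [← zpow_natCast, ← zpow_mul, mul_comm, zpow_mul, zpow_natCast, hζ.pow_eq_one, one_zpow]
  have hterm : ∀ l : ℕ, Complex.exp (↑(l * (2 * π * m / n) + φ) * Complex.I)
      = Complex.exp (φ * Complex.I) * (ζ ^ m) ^ l := by
    intro l
    rw [← zpow_natCast, ← zpow_mul, ← Complex.exp_int_mul, ← Complex.exp_add]
    congr 1
    push_cast
    ring
  have hgeom : ∑ l ∈ range n, (ζ ^ m) ^ l = 0 := by
    rw [geom_sum_eq hz, hzn, sub_self, zero_div]
  calc ∑ l ∈ range n, sin (l * (2 * π * m / n) + φ)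
      = (∑ l ∈ range n, Complex.exp (↑(l * (2 * π * m / n) + φ) * Complex.I)).im := by
        simp only [Complex.im_sum, Complex.exp_ofReal_mul_I_im]
    _ = 0 := by simp only [hterm, ← mul_sum, hgeom, mul_zero, Complex.zero_im]

theorem cos_add_mul_sin_add_cos_mul_sin_add (x y p q : ℝ) :
    cos (x + p) * sin y + cos x * sin (y + q) =
      (sin (x + y + p) + sin (x + y + q) - (sin (x - y + p) + sin (x - y - q))) / 2 := by
  simp only [sin_add, sin_sub, cos_add, cos_sub]
  ring

theorem sum_range_cos_mul_sin_lag_eq_zero {n i j : ℕ} (hij : 0 < i + j) (hijn : i + j < n)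
    (u : ℕ) :
    ∑ l ∈ range n,
      (cos (((l + u + 1 : ℕ) : ℝ) * (2 * π * i / n)) * sin (((l + 1 : ℕ) : ℝ) * (2 * π * j / n)) +
        cos (((l + 1 : ℕ) : ℝ) * (2 * π * i / n)) *
          sin (((l + u + 1 : ℕ) : ℝ) * (2 * π * j / n))) = 0 := by
  have hplus : ¬ (n : ℤ) ∣ ((i + j : ℕ) : ℤ) := by
    rw [Int.natCast_dvd_natCast]
    exact Nat.not_dvd_of_pos_of_lt hij hijn
  have hterm (l : ℕ) (a b : ℝ) :
      cos (((l + u + 1 : ℕ) : ℝ) * a) * sin (((l + 1 : ℕ) : ℝ) * b) +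
        cos (((l + 1 : ℕ) : ℝ) * a) * sin (((l + u + 1 : ℕ) : ℝ) * b) =
      (sin (l * (a + b) + (a + b + u * a)) + sin (l * (a + b) + (a + b + u * b)) -
        (sin (l * (a - b) + (a - b + u * a)) + sin (l * (a - b) + (a - b - u * b)))) / 2 := by
    have key := cos_add_mul_sin_add_cos_mul_sin_add (((l + 1 : ℕ) : ℝ) * a)
      (((l + 1 : ℕ) : ℝ) * b) (u * a) (u * b)
    push_cast at key ⊢
    convert key using 3 <;> ring_nf
  have hfreq (c d : ℕ) : (2 * π * c / n : ℝ) + 2 * π * d / n = 2 * π * ((c + d : ℕ) : ℤ) / n := by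
    push_cast; ring
  simp only [hterm, ← sum_div, sum_sub_distrib, sum_add_distrib]
  rw [hfreq, sum_range_sin_mul_add_eq_zero hplus, sum_range_sin_mul_add_eq_zero hplus]
  rcases eq_or_ne i j with rfl | hne
  · simp [sin_neg]
  · have hminus : ¬ (n : ℤ) ∣ (i : ℤ) - j := fun hdvd => hne <| by
      have := Int.eq_zero_of_abs_lt_dvd hdvd (by rw [abs_lt]; omega)
      omega
    have hfreq' : (2 * π * i / n : ℝ) - 2 * π * j / n = 2 * π * ((i : ℤ) - j : ℤ) / n := by
      push_cast; ring
    rw [hfreq', sum_range_sin_mul_add_eq_zero hminus, sum_range_sin_mul_add_eq_zero hminus]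
    simp

theorem sum_range_sum_range_add_sum_range_diag {M : Type*} [AddCommMonoid M] (f : ℕ → ℕ → M)
    (n : ℕ) :
    ∑ k ∈ range n, ∑ l ∈ range n, f k l + ∑ l ∈ range n, f l l =
      ∑ u ∈ range n, ∑ l ∈ range (n - u), (f (l + u) l + f l (l + u)) := by
  induction n with
  | zero => simp
  | succ n ih =>
    have hreflect : ∑ u ∈ range (n + 1), (f n (n - u) + f (n - u) n)
        = ∑ l ∈ range (n + 1), (f n l + f l n) := by
      rw [← sum_range_reflect]
      exact sum_congr rfl fun l hl => by
        rw [mem_range] at hl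
        rw [show n - (n + 1 - 1 - l) = l by omega]
    have hsplit : ∀ u ∈ range (n + 1), ∑ l ∈ range (n + 1 - u), (f (l + u) l + f l (l + u))
        = ∑ l ∈ range (n - u), (f (l + u) l + f l (l + u)) + (f n (n - u) + f (n - u) n) := by
      intro u hu
      rw [mem_range] at hu
      rw [show n + 1 - u = n - u + 1 by omega, sum_range_succ, show n - u + u = n by omega]
    rw [sum_congr rfl hsplit, sum_add_distrib, hreflect, sum_range_succ (fun u => ∑ l ∈ range (n - u), _),
      Nat.sub_self, range_zero, sum_empty, add_zero, ← ih]
    simp only [sum_range_succ, sum_add_distrib]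
    abel

theorem abs_sum_range_sub_le_of_sum_range_eq_zero {g : ℕ → ℝ} {B : ℝ} {n : ℕ}
    (hg : ∀ l, |g l| ≤ B) (hsum : ∑ l ∈ range n, g l = 0) (u : ℕ) :
    |∑ l ∈ range (n - u), g l| ≤ u * B := by
  have htail : ∑ l ∈ range (n - u), g l = -∑ l ∈ Ico (n - u) n, g l := by
    rw [eq_neg_iff_add_eq_zero, sum_range_add_sum_Ico _ (Nat.sub_le n u), hsum]
  have hcard : ((Ico (n - u) n).card : ℝ) ≤ u := by
    rw [Nat.card_Ico]
    exact_mod_cast tsub_tsub_le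
  calc |∑ l ∈ range (n - u), g l| ≤ ∑ l ∈ Ico (n - u) n, |g l| := by
        rw [htail, abs_neg]
        exact abs_sum_le_sum_abs _ _
    _ ≤ (Ico (n - u) n).card * B := by
        simpa only [sum_const, nsmul_eq_mul] using sum_le_sum fun l _ => hg l
    _ ≤ u * B := mul_le_mul_of_nonneg_right hcard ((abs_nonneg _).trans (hg 0))

theorem abs_sum_sum_mul_dist_le {c s : ℕ → ℝ} {n : ℕ} (hc : ∀ k, |c k| ≤ 1) (hs : ∀ l, |s l| ≤ 1)
    (horth : ∀ u, ∑ l ∈ range n, (c (l + u) * s l + c l * s (l + u)) = 0) (ρ : ℕ → ℝ) :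
    |∑ k ∈ range n, ∑ l ∈ range n, c k * s l * ρ (k.dist l)| ≤
      ∑ u ∈ range n, 2 * u * |ρ u| := by
  have hdiag : ∑ l ∈ range n, c l * s l * ρ (l.dist l) = 0 := by
    have := horth 0
    simp only [add_zero, ← two_mul, ← mul_sum, mul_eq_zero, two_ne_zero, false_or] at this
    simp [← sum_mul, this]
  have hlag : ∑ k ∈ range n, ∑ l ∈ range n, c k * s l * ρ (k.dist l) =
      ∑ u ∈ range n, ρ u * ∑ l ∈ range (n - u), (c (l + u) * s l + c l * s (l + u)) := by
    rw [← add_zero (∑ k ∈ range n, _), ← hdiag, sum_range_sum_range_add_sum_range_diag]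
    refine sum_congr rfl fun u _ => ?_
    rw [mul_sum]
    refine sum_congr rfl fun l _ => ?_
    have hdist : (l + u).dist l = u ∧ l.dist (l + u) = u := by
      constructor <;> unfold Nat.dist <;> omega
    rw [hdist.1, hdist.2]
    ring
  have hprod (k l : ℕ) : |c k * s l + c l * s k| ≤ 2 := by
    refine (abs_add_le _ _).trans ?_
    rw [abs_mul, abs_mul]
    nlinarith [hc k, hc l, hs k, hs l, abs_nonneg (c k), abs_nonneg (c l), abs_nonneg (s k),
      abs_nonneg (s l)]
  rw [hlag]
  calc |∑ u ∈ range n, ρ u * ∑ l ∈ range (n - u), (c (l + u) * s l + c l * s (l + u))|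
      ≤ ∑ u ∈ range n, |ρ u| * |∑ l ∈ range (n - u), (c (l + u) * s l + c l * s (l + u))| :=
        (abs_sum_le_sum_abs _ _).trans_eq (sum_congr rfl fun u _ => abs_mul _ _)
    _ ≤ ∑ u ∈ range n, |ρ u| * (u * 2) := by
        gcongr with u
        exact abs_sum_range_sub_le_of_sum_range_eq_zero (fun l => hprod _ _) (horth u) u
    _ = ∑ u ∈ range n, 2 * u * |ρ u| := sum_congr rfl fun u _ => by ring

theorem sum_range_add_one_mul_le_sum_tsum_add {θ : ℕ → ℝ} (hθ : ∀ j, 0 ≤ θ j) (hθs : Summable θ)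
    (n j : ℕ) :
    ∑ u ∈ range n, (u + 1) * θ (u + j) ≤ ∑ k ∈ range n, ∑' i, θ (k + i) := by
  calc ∑ u ∈ range n, (u + 1) * θ (u + j)
      = ∑ u ∈ range n, ∑ k ∈ range (u + 1), θ (k + (u - k + j)) := by
        refine sum_congr rfl fun u _ => ?_
        rw [sum_congr rfl fun k hk => by rw [show k + (u - k + j) = u + j by
          rw [mem_range] at hk; omega], sum_const, card_range, nsmul_eq_mul]
        push_cast; ring
    _ = ∑ k ∈ range n, ∑ v ∈ range (n - k), θ (k + (v + j)) :=
        sum_range_diag_flip n fun k v => θ (k + (v + j))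
    _ ≤ ∑ k ∈ range n, ∑' i, θ (k + i) := by
        refine sum_le_sum fun k _ => ?_
        have hshift : Summable fun i => θ (k + i) := by
          simpa only [add_comm k] using (summable_nat_add_iff k).2 hθs
        rw [range_eq_Ico, sum_Ico_add' (fun i => θ (k + i))]
        exact hshift.sum_le_tsum _ fun _ _ => hθ _

theorem sum_range_add_one_mul_tsum_le {θ : ℕ → ℝ} (hθ : ∀ j, 0 ≤ θ j) (hθs : Summable θ)
    (n : ℕ) :
    ∑ u ∈ range n, (u + 1) * ∑' j, θ j * θ (u + j) ≤
      (∑' j, θ j) * ∑ k ∈ range n, ∑' i, θ (k + i) := by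
  set T := ∑ k ∈ range n, ∑' i, θ (k + i)
  have hbound (j : ℕ) : θ j * ∑ u ∈ range n, (u + 1) * θ (u + j) ≤ θ j * T :=
    mul_le_mul_of_nonneg_left (sum_range_add_one_mul_le_sum_tsum_add hθ hθs n j) (hθ j)
  have hnonneg (j : ℕ) : 0 ≤ θ j * ∑ u ∈ range n, (u + 1) * θ (u + j) :=
    mul_nonneg (hθ j) (sum_nonneg fun u _ => by have := hθ (u + j); positivity)
  have hlag (u : ℕ) : Summable fun j => θ j * θ (u + j) :=
    .of_nonneg_of_le (fun j => mul_nonneg (hθ j) (hθ _))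
      (fun j => mul_le_mul_of_nonneg_left (hθs.le_tsum _ fun _ _ => hθ _) (hθ j))
      (hθs.mul_right (∑' i, θ i))
  calc ∑ u ∈ range n, (u + 1) * ∑' j, θ j * θ (u + j)
      = ∑' j, θ j * ∑ u ∈ range n, (u + 1) * θ (u + j) := by
        simp_rw [← tsum_mul_left]
        rw [← Summable.tsum_finsetSum fun u _ => (hlag u).mul_left _]
        congr 1 with j
        rw [mul_sum]
        exact sum_congr rfl fun u _ => by ring
    _ ≤ ∑' j, θ j * T :=
        Summable.tsum_le_tsum hbound (.of_nonneg_of_le hnonneg hbound (hθs.mul_right T))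
          (hθs.mul_right T)
    _ = (∑' j, θ j) * T := tsum_mul_right

theorem sum_range_mul_abs_le_of_abs_le_tsum {θ r : ℕ → ℝ} (hθ : ∀ j, 0 ≤ θ j)
    (hθs : Summable θ) (hr : ∀ u, |r u| ≤ ∑' j, θ j * θ (u + j)) (n : ℕ) :
    ∑ u ∈ range n, 2 * u * |r u| ≤ 2 * (∑' j, θ j) * ∑ k ∈ range n, ∑' i, θ (k + i) := by
  calc ∑ u ∈ range n, 2 * u * |r u|
      ≤ 2 * ∑ u ∈ range n, (u + 1) * ∑' j, θ j * θ (u + j) := by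
        rw [mul_sum]
        refine sum_le_sum fun u _ => ?_
        rw [mul_assoc]
        gcongr
        · linarith
        · exact hr u
    _ ≤ 2 * (∑' j, θ j) * ∑ k ∈ range n, ∑' i, θ (k + i) := by
        rw [mul_assoc]
        gcongr
        exact sum_range_add_one_mul_tsum_le hθ hθs n

theorem integral_sum_mul_sum_eq {Ω ι : Type*} [MeasurableSpace Ω] {μ : Measure Ω}
    {X : ι → Ω → ℝ} (hX : ∀ k, MemLp (X k) 2 μ) (s : Finset ι) (a b : ι → ℝ) :
    ∫ ω, (∑ k ∈ s, X k ω * a k) * (∑ l ∈ s, X l ω * b l) ∂μ =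
      ∑ k ∈ s, ∑ l ∈ s, a k * b l * ∫ ω, X k ω * X l ω ∂μ := by
  have hint (k l : ι) : Integrable (fun ω => a k * b l * (X k ω * X l ω)) μ :=
    ((hX k).integrable_mul (hX l)).const_mul _
  simp_rw [sum_mul_sum, show ∀ ω k l, X k ω * a k * (X l ω * b l) = a k * b l * (X k ω * X l ω)
    from fun _ _ _ => by ring]
  rw [integral_finsetSum _ fun k _ => integrable_finsetSum _ fun l _ => hint k l]
  refine sum_congr rfl fun k _ => ?_
  rw [integral_finsetSum _ fun l _ => hint k l]
  exact sum_congr rfl fun l _ => integral_const_mul _ _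

theorem integral_mul_eq_of_stationary {Ω : Type*} [MeasurableSpace Ω] {μ : Measure Ω}
    {X : ℕ → Ω → ℝ} {r : ℕ → ℝ} (hcov : ∀ i u : ℕ, ∫ ω, X i ω * X (i + u) ω ∂μ = r u)
    (k l : ℕ) : ∫ ω, X k ω * X l ω ∂μ = r (k.dist l) := by
  rcases le_total k l with hkl | hlk
  · rw [Nat.dist_eq_sub_of_le hkl, ← hcov, Nat.add_sub_cancel' hkl]
  · rw [Nat.dist_eq_sub_of_le_right hlk, ← hcov, Nat.add_sub_cancel' hlk]
    simp only [mul_comm]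

theorem two_mul_lt_of_two_pi_mul_div_lt_pi {n i : ℕ} (hn : 0 < n) (h : 2 * π * i / n < π) :
    2 * i < n := by
  rw [div_lt_iff₀ (by exact_mod_cast hn)] at h
  exact_mod_cast (by nlinarith [pi_pos] : (2 * i : ℝ) < n)

theorem stmt_9_general (Ω : Type) [MeasurableSpace Ω] (μ : Measure Ω)
    (X : ℕ → Ω → ℝ) (θ : ℕ → ℝ) (r : ℕ → ℝ)
    (hL2 : ∀ k, MemLp (X k) 2 μ)
    (hθ : ∀ j, 0 ≤ θ j) (hθsum : Summable θ)
    (hcov : ∀ i u : ℕ, ∫ ω, X i ω * X (i + u) ω ∂μ = r u)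
    (hrdom : ∀ u, |r u| ≤ ∑' j, θ j * θ (u + j)) :
    ∃ C : ℝ, 0 < C ∧ ∀ n i j : ℕ, 1 ≤ i → 2 * π * i / n < π → 1 ≤ j → 2 * π * j / n < π →
      |∫ ω, (∑ k ∈ Finset.Icc 1 n, X k ω * Real.cos (k * (2 * π * i / n))) *
            (∑ k ∈ Finset.Icc 1 n, X k ω * Real.sin (k * (2 * π * j / n))) ∂μ| ≤
        C * ∑ k ∈ Finset.range (n + 1), ∑' i', θ (k + i') := by
  have hS : 0 ≤ ∑' t, θ t := tsum_nonneg hθ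
  have hΘ (m : ℕ) : 0 ≤ ∑ k ∈ range m, ∑' i', θ (k + i') :=
    sum_nonneg fun k _ => tsum_nonneg fun _ => hθ _
  refine ⟨2 * ∑' t, θ t + 1, by positivity, fun n i j hi hωi _ hωj => ?_⟩
  rcases n.eq_zero_or_pos with rfl | hn
  · simpa using mul_nonneg (by positivity : (0 : ℝ) ≤ 2 * ∑' t, θ t + 1) (hΘ 1)
  have hij : i + j < n := by
    have := two_mul_lt_of_two_pi_mul_div_lt_pi hn hωi
    have := two_mul_lt_of_two_pi_mul_div_lt_pi hn hωj
    omega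
  have hIcc (f : ℕ → ℝ) : ∑ k ∈ Icc 1 n, f k = ∑ k ∈ range n, f (k + 1) := by
    rw [range_eq_Ico, sum_Ico_add', ← Ico_add_one_right_eq_Icc, zero_add]
  rw [integral_sum_mul_sum_eq hL2]
  simp only [integral_mul_eq_of_stationary hcov, hIcc, Nat.dist_add_add_right]
  calc _ ≤ ∑ u ∈ range n, 2 * u * |r u| :=
        abs_sum_sum_mul_dist_le (c := fun k => cos (((k + 1 : ℕ) : ℝ) * (2 * π * i / n)))
          (s := fun l => sin (((l + 1 : ℕ) : ℝ) * (2 * π * j / n)))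
          (fun _ => abs_cos_le_one _) (fun _ => abs_sin_le_one _)
          (sum_range_cos_mul_sin_lag_eq_zero (by omega) hij) r
    _ ≤ 2 * (∑' t, θ t) * ∑ k ∈ range n, ∑' i', θ (k + i') :=
        sum_range_mul_abs_le_of_abs_le_tsum hθ hθsum hrdom n
    _ ≤ (2 * ∑' t, θ t + 1) * ∑ k ∈ range (n + 1), ∑' i', θ (k + i') := by
        refine mul_le_mul (by linarith) ?_ (hΘ n) (by positivity)
        rw [sum_range_succ]
        exact le_add_of_nonneg_right (tsum_nonneg fun _ => hθ _)

/-- Lemma 3.3 (iii): under the same assumptions as in (i), with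
`S_{n,i,1} = ∑_{k=1}^n X_k cos(k ω_i)` and `S_{n,j,2} = ∑_{k=1}^n X_k sin(k ω_j)`:
`max_{1≤i,j≤q} |E S_{n,i,1} S_{n,j,2}| ≤ C ∑_{k=0}^n Θ_k`. -/
theorem stmt_9 (Ω : Type) [MeasurableSpace Ω] (μ : Measure Ω) [IsProbabilityMeasure μ]
    (X : ℕ → Ω → ℝ) (θ : ℕ → ℝ) (r : ℕ → ℝ)
    (hmeas : ∀ k, Measurable (X k))
    (hL2 : ∀ k, MemLp (X k) 2 μ)
    (hmean : ∫ ω, X 0 ω ∂μ = 0)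
    (hθ : ∀ j, 0 ≤ θ j) (hθsum : Summable θ)
    (hcov : ∀ i u : ℕ, ∫ ω, X i ω * X (i + u) ω ∂μ = r u)
    (hrdom : ∀ u, |r u| ≤ ∑' j, θ j * θ (u + j)) :
    ∃ C : ℝ, 0 < C ∧ ∀ n i j : ℕ, 1 ≤ i → 2 * π * i / n < π → 1 ≤ j → 2 * π * j / n < π →
      |∫ ω, (∑ k ∈ Finset.Icc 1 n, X k ω * Real.cos (k * (2 * π * i / n))) *
            (∑ k ∈ Finset.Icc 1 n, X k ω * Real.sin (k * (2 * π * j / n))) ∂μ| ≤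
        C * ∑ k ∈ Finset.range (n + 1), ∑' i', θ (k + i') :=
  stmt_9_general Ω μ X θ r hL2 hθ hθsum hcov hrdom
end
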